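/- Let m ≥ 3 and let n ≥ 5 be odd. For every i with 0 ≤ i ≤ m−1 and every pair of distinct j, j' ∈ Z/nZ, the Cartesian product P_m □ C_n has a 2-factor consisting of two cycles that separates the pair {u_{i,j}, u_{i,j'}}. -/

import Mathlib

open SimpleGraph

/-- `H` is a 2-factor of `X`: a spanning subgraph of `X` (on the same vertex set)
in which every vertex has valency 2. -/
def IsTwoFactor {V : Type*} (X H : SimpleGraph V) : Prop :=
  H ≤ X ∧ ∀ v : V, (H.neighborSet v).ncard = 2

/-- The 2-factor `H` separates the vertex set `A`: every connected component (cycle)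
of `H` contains exactly one vertex of `A`; in particular `H` consists of exactly
`A.card` cycles, each containing exactly one vertex of `A`. -/
def SeparatesSet {V : Type*} (H : SimpleGraph V) (A : Finset V) : Prop :=
  ∀ C : H.ConnectedComponent, ∃! a : V, a ∈ A ∧ H.connectedComponentMk a = C

/-- A graph `X` is `k`-spanning cyclable if for every set `A` of `k` distinct vertices
there is a 2-factor of `X` consisting of `k` cycles such that each vertex of `A`
belongs to a distinct cycle. -/
def SpanningCyclable {V : Type*} (X : SimpleGraph V) (k : ℕ) : Prop :=
  ∀ A : Finset V, A.card = k → ∃ H : SimpleGraph V, IsTwoFactor X H ∧ SeparatesSet H A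

/-- The cycle `C_n` on vertex set `ZMod n`: `x` and `y` are adjacent iff `x - y ∈ {1, -1}`. -/
def cycleZMod (n : ℕ) : SimpleGraph (ZMod n) :=
  SimpleGraph.circulantGraph ({1, -1} : Set (ZMod n))

/-- The pseudo-Cartesian product `C_m □_ℓ C_n`: start with `P_m □ C_n` (columns indexed by
`Fin m`, rows by `ZMod n`) and add the edges from `u_{m-1,j}` to `u_{0,j+ℓ}`.
When `ℓ = 0` this is the Cartesian product `C_m □ C_n`. -/
def pseudoProd (m n : ℕ) (l : ZMod n) : SimpleGraph (Fin m × ZMod n) :=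
  SimpleGraph.fromRel (fun u v =>
    (u.1 = v.1 ∧ v.2 = u.2 + 1) ∨
    ((u.1 : ℕ) + 1 = (v.1 : ℕ) ∧ u.2 = v.2) ∨
    ((u.1 : ℕ) = m - 1 ∧ (v.1 : ℕ) = 0 ∧ v.2 = u.2 + l))

/-!
Choose `a` with `j ∈ {a, a + 1}` and `j' ∉ {a, a + 1}`. A grid `P_p □ P_q` with `p` even has a
Hamiltonian cycle. If `m` is even, the rows `a, a + 1` and the remaining `n - 2` rows each span
such a grid, and their Hamiltonian cycles form the 2-factor. If `m` is odd, let `c₀ ≠ i` be an end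
column of `P_m`: one cycle runs around all of column `c₀` and then through rows `a, a + 1` of the
other `m - 1` columns, and the remaining rows of those `m - 1` columns form a grid with an even
number of columns.

Cycles are encoded as the lists of their vertices in cyclic order; two disjoint lists covering all
vertices yield the 2-factor as the image of a disjoint union of two cycle graphs.
-/

section TwoFactor

variable {V : Type*} {X : SimpleGraph V}

theorem separatesSet_pair [DecidableEq V] {H : SimpleGraph V} {a b : V}
    (hab : ¬H.Reachable a b) (hcover : ∀ v, H.Reachable v a ∨ H.Reachable v b) :
    SeparatesSet H {a, b} := by
  intro C
  induction C using ConnectedComponent.ind with | h v => ?_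
  rcases hcover v with hv | hv
  · refine ⟨a, ⟨by simp, ConnectedComponent.eq.mpr hv.symm⟩, ?_⟩
    rintro x ⟨hx, hxv⟩
    rcases Finset.mem_insert.mp hx with rfl | hx
    · rfl
    · rw [Finset.mem_singleton.mp hx] at hxv
      exact absurd ((ConnectedComponent.eq.mp hxv).trans hv).symm hab
  · refine ⟨b, ⟨by simp, ConnectedComponent.eq.mpr hv.symm⟩, ?_⟩
    rintro x ⟨hx, hxv⟩
    rcases Finset.mem_insert.mp hx with rfl | hx
    · exact absurd ((ConnectedComponent.eq.mp hxv).trans hv) hab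
    · exact Finset.mem_singleton.mp hx

theorem isTwoFactor_map {W : Type*} {G : SimpleGraph W} (e : W ≃ V)
    (hG : ∀ w, (G.neighborSet w).ncard = 2) (hX : ∀ u v, G.Adj u v → X.Adj (e u) (e v)) :
    IsTwoFactor X (G.map e) := by
  refine ⟨(map_le_iff_le_comap e.toEmbedding G X).mpr fun u v => hX u v, fun v => ?_⟩
  obtain ⟨w, rfl⟩ := e.surjective v
  rw [show e w = Iso.map e G w from rfl, ← Iso.image_neighborSet,
    Set.ncard_image_of_injective _ (Iso.map e G).injective]
  exact hG w

theorem separatesSet_map_sum [DecidableEq V] {W₁ W₂ : Type*} {G₁ : SimpleGraph W₁}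
    {G₂ : SimpleGraph W₂} (h₁ : G₁.Preconnected) (h₂ : G₂.Preconnected) (e : W₁ ⊕ W₂ ≃ V)
    (p : W₁) (q : W₂) : SeparatesSet ((G₁ ⊕g G₂).map e) {e (.inl p), e (.inr q)} := by
  let φ := Iso.map e (G₁ ⊕g G₂)
  refine separatesSet_pair (fun h => not_reachable_sum_inl_inr p q (φ.reachable_iff.mp h)) ?_
  intro v
  obtain ⟨x | x, rfl⟩ := e.surjective v
  · exact .inl (φ.reachable_iff.mpr ((h₁ x p).map Embedding.sumInl.toHom))
  · exact .inr (φ.reachable_iff.mpr ((h₂ x q).map Embedding.sumInr.toHom))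

theorem ncard_neighborSet_cycleGraph {n : ℕ} (hn : 3 ≤ n) (v : Fin n) :
    ((cycleGraph n).neighborSet v).ncard = 2 := by
  obtain ⟨k, rfl⟩ : ∃ k, n = k + 3 := ⟨n - 3, by omega⟩
  rw [Set.ncard_eq_toFinset_card', Set.toFinset_card, card_neighborSet_eq_degree]
  exact cycleGraph_degree_three_le

theorem Fin.val_eq_add_one_mod_of_val_sub_eq_one {L : ℕ} {u v : Fin L} (h : (v - u).val = 1) :
    v.val = (u.val + 1) % L := by
  have hu := u.isLt
  have hv := v.isLt
  rw [Fin.val_sub] at h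
  rcases le_or_gt u.val v.val with hle | hlt
  · rw [show L - u + v = (v - u) + L by omega, Nat.add_mod_right, Nat.mod_eq_of_lt (by omega)] at h
    rw [Nat.mod_eq_of_lt (by omega)]
    omega
  · rw [Nat.mod_eq_of_lt (by omega)] at h
    rw [show u.val + 1 = L by omega, Nat.mod_self]
    omega

/-- `l` lists the vertices of a cycle of `X` in cyclic order; `l.take 1` supplies the closing
edge from the last vertex back to the first. -/
def IsCycleList (X : SimpleGraph V) (l : List V) : Prop :=
  3 ≤ l.length ∧ l.Nodup ∧ (l ++ l.take 1).IsChain X.Adj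

theorem IsCycleList.adj_getElem {l : List V} (h : IsCycleList X l) (i : ℕ) (hi : i < l.length) :
    X.Adj l[i] (l[(i + 1) % l.length]'(Nat.mod_lt _ (by omega))) := by
  have hchain := List.isChain_iff_getElem.mp h.2.2 i (by simp; omega)
  rw [List.getElem_append_left hi] at hchain
  rcases Nat.lt_or_ge (i + 1) l.length with hlt | hge
  · simpa [List.getElem_append_left, hlt, Nat.mod_eq_of_lt hlt] using hchain
  · simpa [List.getElem_append_right, show i + 1 = l.length by omega] using hchain

theorem IsCycleList.adj_get {l : List V} (h : IsCycleList X l) {u v : Fin l.length}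
    (huv : (cycleGraph l.length).Adj u v) : X.Adj (l.get u) (l.get v) := by
  rcases cycleGraph_adj'.mp huv with huv | huv
  · have := h.adj_getElem v v.isLt
    simp only [← Fin.val_eq_add_one_mod_of_val_sub_eq_one huv] at this
    exact this.symm
  · have := h.adj_getElem u u.isLt
    simp only [← Fin.val_eq_add_one_mod_of_val_sub_eq_one huv] at this
    exact this

theorem exists_isTwoFactor_separatesSet_pair [DecidableEq V] {l₁ l₂ : List V}
    (h₁ : IsCycleList X l₁) (h₂ : IsCycleList X l₂) (hdisj : l₁.Disjoint l₂)
    (hcover : ∀ v, v ∈ l₁ ∨ v ∈ l₂) {a b : V} (ha : a ∈ l₁) (hb : b ∈ l₂) :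
    ∃ H, IsTwoFactor X H ∧ SeparatesSet H {a, b} := by
  have hbij : Function.Bijective (Sum.elim l₁.get l₂.get) := by
    refine ⟨(List.nodup_iff_injective_get.mp h₁.2.1).sumElim
      (List.nodup_iff_injective_get.mp h₂.2.1)
      fun p q hpq => hdisj (l₁.get_mem p) (hpq ▸ l₂.get_mem q), fun v => ?_⟩
    rcases hcover v with hv | hv
    · obtain ⟨p, rfl⟩ := List.mem_iff_get.mp hv
      exact ⟨.inl p, rfl⟩
    · obtain ⟨q, rfl⟩ := List.mem_iff_get.mp hv
      exact ⟨.inr q, rfl⟩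
  let e := Equiv.ofBijective _ hbij
  obtain ⟨p, rfl⟩ := List.mem_iff_get.mp ha
  obtain ⟨q, rfl⟩ := List.mem_iff_get.mp hb
  refine ⟨(cycleGraph l₁.length ⊕g cycleGraph l₂.length).map e, isTwoFactor_map e ?_ ?_,
    separatesSet_map_sum cycleGraph_preconnected cycleGraph_preconnected e p q⟩
  · rintro (x | x)
    · rw [neighborSet_sum_inl, Set.ncard_image_of_injective _ Sum.inl_injective]
      exact ncard_neighborSet_cycleGraph h₁.1 x
    · rw [neighborSet_sum_inr, Set.ncard_image_of_injective _ Sum.inr_injective]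
      exact ncard_neighborSet_cycleGraph h₂.1 x
  · rintro (x | x) (y | y) h
    · exact h₁.adj_get (sum_adj_inl.mp h)
    · exact absurd h (not_adj_sum_inl_inr x y)
    · exact absurd h.symm (not_adj_sum_inl_inr y x)
    · exact h₂.adj_get (sum_adj_inr.mp h)

end TwoFactor

section GridCycle

variable {α β : Type*} {G : SimpleGraph α} {K : SimpleGraph β}

/-- A Hamiltonian cycle of the grid `cs × (r :: rs)` for `cs` of even length (a last odd column is
dropped), made of nested U-turns: from `(c, r)` to `(d, r)`, recursively around the columns after
`d`, then down column `d` and up column `c` through the rows `rs`. -/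
def gridCycle : List β → List α → List (α × β)
  | r :: rs, c :: d :: cs =>
      (c, r) :: (d, r) :: gridCycle (r :: rs) cs ++ rs.map (d, ·) ++ rs.reverse.map (c, ·)
  | _, _ => []

theorem mem_gridCycle {rows : List β} : ∀ {cs : List α}, Even cs.length → ∀ {p : α × β},
    p ∈ gridCycle rows cs ↔ p.1 ∈ cs ∧ p.2 ∈ rows
  | [], _, _ => by cases rows <;> simp [gridCycle]
  | [_], h, _ => by simp at h
  | c :: d :: cs, h, ⟨x, y⟩ => by
    have ih := mem_gridCycle (rows := rows) (p := (x, y)) (by simpa [Nat.even_add_one] using h)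
    cases rows with
    | nil => simp [gridCycle]
    | cons r rs =>
      simp only [gridCycle, List.cons_append, List.mem_cons, List.mem_append, ih, List.mem_map,
        List.mem_reverse, Prod.mk.injEq]
      aesop

theorem nodup_gridCycle {rows : List β} (hrows : rows.Nodup) :
    ∀ {cs : List α}, Even cs.length → cs.Nodup → (gridCycle rows cs).Nodup
  | [], _, _ => by cases rows <;> simp [gridCycle]
  | [_], h, _ => by simp at h
  | c :: d :: cs, h, hcs => by
    have heven : Even cs.length := by simpa [Nat.even_add_one] using h
    have ih := nodup_gridCycle hrows heven (hcs.sublist (by simp))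
    cases rows with
    | nil => simp [gridCycle]
    | cons r rs =>
      obtain ⟨hr, hrs⟩ := List.nodup_cons.mp hrows
      have hcol : ∀ z : α, (rs.map (z, ·)).Nodup := fun z => hrs.map (Prod.mk_right_injective z)
      simp only [List.nodup_cons, List.mem_cons] at hcs
      simp only [gridCycle, List.cons_append, List.nodup_cons, List.nodup_append, List.mem_append,
        List.mem_cons, mem_gridCycle heven, List.mem_map, List.mem_reverse, List.map_reverse,
        List.nodup_reverse, hcol, ih]
      aesop

theorem isChain_map_append_map_reverse {R : List β} (hR : R.IsChain K.Adj) {c d : α}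
    (hdc : G.Adj d c) {y : α × β} (hy : ∀ r ∈ R.head?, (G □ K).Adj (c, r) y) :
    (R.map (d, ·) ++ (R.reverse.map (c, ·) ++ [y])).IsChain (G □ K).Adj := by
  have hcol : ∀ z : α, (R.map (z, ·)).IsChain (G □ K).Adj := fun z =>
    List.isChain_map_of_isChain _ (fun _ _ h => boxProd_adj_right.mpr h) hR
  rw [List.map_reverse]
  refine (hcol d).append ((List.isChain_reverse.mpr ((hcol c).imp fun _ _ h => h.symm)).append
    (.singleton y) (by simpa using hy)) ?_
  intro a ha b hb
  simp only [List.getLast?_map, Option.mem_def, Option.map_eq_some_iff] at ha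
  obtain ⟨r, hr, rfl⟩ := ha
  simp [List.head?_append, hr] at hb
  exact hb ▸ boxProd_adj_left.mpr hdc

/-- Stated with neighbours `x`, `y` of the two ends so that the induction also covers an empty
inner grid, where `x` and `y` are adjacent. -/
theorem isChain_cons_gridCycle_append {r r' : β} {rs : List β}
    (hrows : (r :: r' :: rs).IsChain K.Adj) : ∀ {cs : List α} {x y : α × β},
      cs.IsChain G.Adj → (G □ K).Adj x y →
      (∀ c ∈ cs.head?, (G □ K).Adj x (c, r) ∧ (G □ K).Adj (c, r') y) →
      (x :: gridCycle (r :: r' :: rs) cs ++ [y]).IsChain (G □ K).Adj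
  | [], _, _, _, hxy, _ | [_], _, _, _, hxy, _ => by simpa [gridCycle] using hxy
  | c :: d :: cs, x, y, hcs, _, hends => by
    obtain ⟨hxc, hcy⟩ := hends c rfl
    have hcd : G.Adj c d := (List.isChain_cons_cons.mp hcs).1
    have hinner : ((d, r) :: gridCycle (r :: r' :: rs) cs ++ [(d, r')]).IsChain (G □ K).Adj := by
      refine isChain_cons_gridCycle_append hrows hcs.tail.tail
        (boxProd_adj_right.mpr (List.isChain_cons_cons.mp hrows).1) fun e he => ?_
      have hde : G.Adj d e := hcs.tail.rel_head? he
      exact ⟨boxProd_adj_left.mpr hde, boxProd_adj_left.mpr hde.symm⟩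
    have hsplit : x :: gridCycle (r :: r' :: rs) (c :: d :: cs) ++ [y] =
        (x :: (c, r) :: (d, r) :: gridCycle (r :: r' :: rs) cs) ++
          (d, r') :: (rs.map (d, ·) ++ ((r' :: rs).reverse.map (c, ·) ++ [y])) := by
      simp [gridCycle]
    rw [hsplit, List.isChain_split]
    exact ⟨.cons_cons hxc (.cons_cons (boxProd_adj_left.mpr hcd) hinner),
      isChain_map_append_map_reverse (List.isChain_cons_cons.mp hrows).2 hcd.symm
        (by simpa using hcy)⟩

theorem isCycleList_gridCycle {rows : List β} {cs : List α} (hrows : rows.IsChain K.Adj)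
    (hrows_nd : rows.Nodup) (hrows_len : 2 ≤ rows.length) (hcs : cs.IsChain G.Adj)
    (hcs_nd : cs.Nodup) (heven : Even cs.length) (hcs_ne : cs ≠ []) :
    IsCycleList (G □ K) (gridCycle rows cs) := by
  rcases rows with _ | ⟨r, _ | ⟨r', rs⟩⟩ <;> simp at hrows_len
  rcases cs with _ | ⟨c, _ | ⟨d, cs⟩⟩ <;> simp at hcs_ne heven
  refine ⟨by simp [gridCycle]; omega, nodup_gridCycle hrows_nd (by simpa) hcs_nd, ?_⟩
  have hv : (G □ K).Adj (c, r') (c, r) :=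
    boxProd_adj_right.mpr (List.isChain_cons_cons.mp hrows).1.symm
  simpa [gridCycle] using (isChain_cons_gridCycle_append hrows hcs hv fun e he => by
    obtain rfl : c = e := by simpa using he
    exact ⟨hv, hv⟩).tail

end GridCycle

section Arc

variable {n : ℕ}

theorem cycleZMod_adj_add_one (hn : n ≠ 1) (x : ZMod n) : (cycleZMod n).Adj x (x + 1) := by
  have : Nontrivial (ZMod n) := ZMod.nontrivial_iff.mpr hn
  simp [cycleZMod, circulantGraph_adj]

def arc (b : ZMod n) (k : ℕ) : List (ZMod n) := (List.range k).map fun t : ℕ => b + t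

theorem mem_arc {b x : ZMod n} {k : ℕ} : x ∈ arc b k ↔ ∃ t < k, b + t = x := by
  simp [arc]

theorem arc_add (b : ZMod n) (k l : ℕ) : arc b (k + l) = arc b k ++ arc (b + (k : ZMod n)) l := by
  simp [arc, List.range_add, add_assoc]

theorem arc_succ (b : ZMod n) (k : ℕ) : arc b (k + 1) = b :: arc (b + 1) k := by
  rw [add_comm, arc_add]
  simp [arc]

theorem arc_two (b : ZMod n) : arc b 2 = [b, b + 1] := by
  simp [arc, List.range_succ]

theorem arc_two_append (hn : 2 ≤ n) (b : ZMod n) :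
    arc b 2 ++ arc (b + 2) (n - 2) = arc b n := by
  have h := arc_add b 2 (n - 2)
  rw [Nat.add_sub_cancel' hn, Nat.cast_ofNat] at h
  exact h.symm

theorem arc_append_self (hn : n ≠ 0) (b : ZMod n) :
    arc (b + 1) (n - 1) ++ [b] = arc (b + 1) n := by
  have h := arc_add (b + 1) (n - 1) 1
  rw [Nat.sub_add_cancel (Nat.one_le_iff_ne_zero.mpr hn)] at h
  rw [h]
  simp [arc, Nat.cast_sub (Nat.one_le_iff_ne_zero.mpr hn)]

theorem isChain_arc (hn : n ≠ 1) (b : ZMod n) (k : ℕ) :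
    (arc b k).IsChain (cycleZMod n).Adj := by
  refine List.isChain_map_of_isChain _ (R := fun s t => t = s + 1) (fun s t h => ?_) ?_
  · subst h
    simpa [add_assoc] using cycleZMod_adj_add_one hn (b + s)
  · exact (List.isChain_range _ _).mpr fun _ _ => rfl

theorem nodup_arc {k : ℕ} (hk : k ≤ n) (b : ZMod n) : (arc b k).Nodup := by
  refine List.nodup_range.map_on fun s hs t ht h => ?_
  simp only [List.mem_range, add_right_inj] at hs ht h
  rw [← ZMod.val_cast_of_lt (hs.trans_le hk), h, ZMod.val_cast_of_lt (ht.trans_le hk)]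

theorem mem_arc_self [NeZero n] (b x : ZMod n) : x ∈ arc b n :=
  mem_arc.mpr ⟨(x - b).val, ZMod.val_lt _, by simp⟩

theorem exists_mem_arc_two_mem_arc (hn : 3 ≤ n) {j j' : ZMod n} (hjj : j ≠ j') :
    ∃ a, j ∈ arc a 2 ∧ j' ∈ arc (a + 2) (n - 2) := by
  have : NeZero n := ⟨by omega⟩
  suffices ∃ a, j ∈ arc a 2 ∧ j' ∉ arc a 2 by
    obtain ⟨a, hj, hj'⟩ := this
    have := mem_arc_self a j'
    rw [← arc_two_append (by omega), List.mem_append] at this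
    exact ⟨a, hj, this.resolve_left hj'⟩
  have h2 : (2 : ZMod n) ≠ 0 := fun h => by
    have := Nat.le_of_dvd two_pos ((ZMod.natCast_eq_zero_iff 2 n).mp (by exact_mod_cast h))
    omega
  by_cases h : j' = j + 1
  · refine ⟨j - 1, by simp [arc_two], ?_⟩
    simp only [arc_two, sub_add_cancel, List.mem_cons, List.not_mem_nil, or_false, not_or]
    exact ⟨fun h' => h2 (by linear_combination h' - h), Ne.symm hjj⟩
  · refine ⟨j, by simp [arc_two], ?_⟩
    simp [arc_two, Ne.symm hjj, h]

end Arc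

theorem isChain_finRange (m : ℕ) : (List.finRange m).IsChain (pathGraph m).Adj := by
  rw [← List.ofFn_id, List.isChain_ofFn]
  intro i hi
  simp [pathGraph_adj]

theorem exists_isChain_pathGraph_cons (m : ℕ) (i : Fin (m + 2)) :
    ∃ c₀ cs, (c₀ :: cs).IsChain (pathGraph (m + 2)).Adj ∧ (c₀ :: cs).Nodup ∧
      (∀ c, c ∈ c₀ :: cs) ∧ cs.length = m + 1 ∧ i ∈ cs := by
  by_cases hi : i = 0
  · refine ⟨Fin.last (m + 1), ((List.finRange (m + 1)).map Fin.castSucc).reverse, ?_⟩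
    have h : Fin.last (m + 1) :: ((List.finRange (m + 1)).map Fin.castSucc).reverse =
        (List.finRange (m + 2)).reverse := by
      simp [List.finRange_succ_last (n := m + 1)]
    rw [h]
    refine ⟨List.isChain_reverse.mpr ((isChain_finRange _).imp fun _ _ h => h.symm),
      List.nodup_reverse.mpr (List.nodup_finRange _), by simp, by simp, ?_⟩
    simp only [List.mem_reverse, List.mem_map, List.mem_finRange, true_and, hi]
    exact ⟨0, rfl⟩
  · refine ⟨0, (List.finRange (m + 1)).map Fin.succ, ?_⟩
    rw [← List.finRange_succ]
    refine ⟨isChain_finRange _, List.nodup_finRange _, List.mem_finRange, by simp, ?_⟩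
    simp only [List.mem_map, List.mem_finRange, true_and]
    exact ⟨i.pred hi, Fin.succ_pred i hi⟩

section BoxProdCycle

variable {α : Type*} {G : SimpleGraph α} {n : ℕ}

def columnLadder (c₀ : α) (cs : List α) (a : ZMod n) : List (α × ZMod n) :=
  (c₀, a) :: gridCycle (arc a 2) cs ++ (c₀, a + 1) :: (arc (a + 2) (n - 2)).map (c₀, ·)

theorem mem_columnLadder (hn : 2 ≤ n) {c₀ : α} {cs : List α} (heven : Even cs.length)
    {a : ZMod n} {p : α × ZMod n} :
    p ∈ columnLadder c₀ cs a ↔ p.1 = c₀ ∨ p.1 ∈ cs ∧ p.2 ∈ arc a 2 := by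
  have : NeZero n := ⟨by omega⟩
  obtain ⟨c, x⟩ := p
  have hx := mem_arc_self a x
  rw [← arc_two_append hn, arc_two] at hx
  simp only [columnLadder, List.cons_append, List.mem_cons, List.mem_append, mem_gridCycle heven,
    List.mem_map, Prod.mk.injEq, arc_two, List.not_mem_nil, or_false] at hx ⊢
  constructor
  · rintro (⟨rfl, -⟩ | h | ⟨rfl, -⟩ | ⟨-, -, rfl, -⟩) <;> tauto
  · rintro (rfl | h)
    · rcases hx with rfl | rfl | hx <;> tauto
    · tauto

theorem isCycleList_columnLadder (hn : 4 ≤ n) {c₀ : α} {cs : List α}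
    (hcs : (c₀ :: cs).IsChain G.Adj) (hcs_nd : (c₀ :: cs).Nodup) (heven : Even cs.length)
    (a : ZMod n) : IsCycleList (G □ cycleZMod n) (columnLadder c₀ cs a) := by
  have hrows_nd := List.nodup_append.mp (arc_two_append (by omega) a ▸ nodup_arc le_rfl a)
  obtain ⟨hc₀, hcs_nd⟩ := List.nodup_cons.mp hcs_nd
  refine ⟨by simp [columnLadder, arc]; omega, ?_, ?_⟩
  · have hcol : ((arc (a + 2) (n - 2)).map (c₀, ·)).Nodup :=
      hrows_nd.2.1.map (Prod.mk_right_injective c₀)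
    have hR : ∀ x ∈ arc (a + 2) (n - 2), x ≠ a ∧ x ≠ a + 1 := fun x hx =>
      ⟨(hrows_nd.2.2 a (by simp [arc_two]) x hx).symm,
        (hrows_nd.2.2 (a + 1) (by simp [arc_two]) x hx).symm⟩
    have ha : a ≠ a + 1 := by simpa [arc_two] using hrows_nd.1
    have ha2 : ∀ x, x ∈ arc a 2 ↔ x = a ∨ x = a + 1 := by simp [arc_two]
    simp only [columnLadder, List.cons_append, List.nodup_cons, List.nodup_append,
      List.mem_append, List.mem_cons, mem_gridCycle heven, nodup_gridCycle hrows_nd.1 heven hcs_nd,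
      hcol, List.mem_map, Prod.mk.injEq, ha2, true_and, and_true]
    refine ⟨?_, ?_, ?_⟩
    · rintro (⟨h, -⟩ | h | ⟨x, hx, rfl⟩)
      exacts [hc₀ h, ha h, (hR _ hx).1 rfl]
    · rintro ⟨x, hx, rfl⟩
      exact (hR _ hx).2 rfl
    · rintro ⟨c, x⟩ ⟨hc, -⟩ b (rfl | ⟨y, -, rfl⟩) h <;> exact hc₀ ((Prod.mk.inj h).1 ▸ hc)
  · have hclosed : columnLadder c₀ cs a ++ (columnLadder c₀ cs a).take 1 =
        ((c₀, a) :: gridCycle [a, a + 1] cs) ++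
          (c₀, a + 1) :: ((arc (a + 2) (n - 2)).map (c₀, ·) ++ [(c₀, a)]) := by
      simp [columnLadder, arc_two]
    have hcol : (a + 1) :: arc (a + 2) (n - 2) ++ [a] = arc (a + 1) n := by
      rw [← arc_append_self (by omega), show n - 1 = n - 2 + 1 by omega, arc_succ, add_assoc,
        one_add_one_eq_two]
    have hvert : (G □ cycleZMod n).Adj (c₀, a) (c₀, a + 1) :=
      boxProd_adj_right.mpr (cycleZMod_adj_add_one (by omega) a)
    rw [hclosed, List.isChain_split]
    refine ⟨isChain_cons_gridCycle_append (by simpa [arc_two] using isChain_arc (by omega) a 2)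
      hcs.tail hvert fun e he => ?_, ?_⟩
    · have hce : G.Adj c₀ e := hcs.rel_head? he
      exact ⟨boxProd_adj_left.mpr hce, boxProd_adj_left.mpr hce.symm⟩
    · have := List.isChain_map_of_isChain (Prod.mk c₀) (S := (G □ cycleZMod n).Adj)
        (fun _ _ h => boxProd_adj_right.mpr h) (isChain_arc (by omega) (a + 1) n)
      rw [← hcol] at this
      simpa using this

variable [DecidableEq α]

theorem exists_isTwoFactor_separatesSet_of_even (hn : 4 ≤ n) {cs : List α}
    (hcs : cs.IsChain G.Adj) (hcs_nd : cs.Nodup) (hcs_cover : ∀ c, c ∈ cs)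
    (heven : Even cs.length) (hcs_ne : cs ≠ []) (i : α) {a j j' : ZMod n}
    (hj : j ∈ arc a 2) (hj' : j' ∈ arc (a + 2) (n - 2)) :
    ∃ H, IsTwoFactor (G □ cycleZMod n) H ∧ SeparatesSet H {(i, j), (i, j')} := by
  have : NeZero n := ⟨by omega⟩
  have hrows := arc_two_append (by omega) a
  have hrows_nd := List.nodup_append.mp (hrows ▸ nodup_arc le_rfl a)
  refine exists_isTwoFactor_separatesSet_pair
    (isCycleList_gridCycle (isChain_arc (by omega) _ _) hrows_nd.1 (by simp [arc])
      hcs hcs_nd heven hcs_ne)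
    (isCycleList_gridCycle (isChain_arc (by omega) _ _) hrows_nd.2.1 (by simp [arc]; omega)
      hcs hcs_nd heven hcs_ne) (fun p h₁ h₂ => ?_) (fun ⟨c, x⟩ => ?_)
    ((mem_gridCycle heven).mpr ⟨hcs_cover i, hj⟩) ((mem_gridCycle heven).mpr ⟨hcs_cover i, hj'⟩)
  · exact hrows_nd.2.2 _ ((mem_gridCycle heven).mp h₁).2 _ ((mem_gridCycle heven).mp h₂).2 rfl
  · have hx := mem_arc_self a x
    rw [← hrows, List.mem_append] at hx
    simpa [mem_gridCycle heven, hcs_cover c] using hx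

theorem exists_isTwoFactor_separatesSet_of_odd (hn : 4 ≤ n) {c₀ : α} {cs : List α}
    (hcs : (c₀ :: cs).IsChain G.Adj) (hcs_nd : (c₀ :: cs).Nodup) (hcs_cover : ∀ c, c ∈ c₀ :: cs)
    (heven : Even cs.length) (hcs_ne : cs ≠ []) {i : α} (hi : i ∈ cs) {a j j' : ZMod n}
    (hj : j ∈ arc a 2) (hj' : j' ∈ arc (a + 2) (n - 2)) :
    ∃ H, IsTwoFactor (G □ cycleZMod n) H ∧ SeparatesSet H {(i, j), (i, j')} := by
  have : NeZero n := ⟨by omega⟩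
  have hrows := arc_two_append (by omega) a
  have hrows_nd := List.nodup_append.mp (hrows ▸ nodup_arc le_rfl a)
  have hcs' : cs.IsChain G.Adj := hcs.tail
  have hc₀ : c₀ ∉ cs := (List.nodup_cons.mp hcs_nd).1
  refine exists_isTwoFactor_separatesSet_pair (isCycleList_columnLadder hn hcs hcs_nd heven a)
    (isCycleList_gridCycle (isChain_arc (by omega) _ _) hrows_nd.2.1 (by simp [arc]; omega)
      hcs' (List.nodup_cons.mp hcs_nd).2 heven hcs_ne) (fun p h₁ h₂ => ?_) (fun ⟨c, x⟩ => ?_)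
    ((mem_columnLadder (by omega) heven).mpr (.inr ⟨hi, hj⟩))
    ((mem_gridCycle heven).mpr ⟨hi, hj'⟩)
  · rw [mem_gridCycle heven] at h₂
    rcases (mem_columnLadder (by omega) heven).mp h₁ with h₁ | h₁
    · exact hc₀ (h₁ ▸ h₂.1)
    · exact hrows_nd.2.2 _ h₁.2 _ h₂.2 rfl
  · have hx := mem_arc_self a x
    rw [← hrows, List.mem_append] at hx
    have hc := List.mem_cons.mp (hcs_cover c)
    rw [mem_columnLadder (by omega) heven, mem_gridCycle heven]
    tauto

end BoxProdCycle

theorem statement_6_general (m n : ℕ) (hm : 3 ≤ m) (hn : 5 ≤ n)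
    (i : Fin m) (j j' : ZMod n) (hjj : j ≠ j') :
    ∃ H, IsTwoFactor (pathGraph m □ cycleZMod n) H ∧
      SeparatesSet H {(i, j), (i, j')} := by
  obtain ⟨a, hj, hj'⟩ := exists_mem_arc_two_mem_arc (by omega) hjj
  rcases Nat.even_or_odd m with hm_even | ⟨t, ht⟩
  · exact exists_isTwoFactor_separatesSet_of_even (by omega) (isChain_finRange m)
      (List.nodup_finRange m) List.mem_finRange (by simpa using hm_even) (by simp; omega) i hj hj'
  · obtain ⟨k, rfl⟩ : ∃ k, m = k + 2 := ⟨m - 2, by omega⟩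
    obtain ⟨c₀, cs, hcs, hnd, hcover, hlen, hi⟩ := exists_isChain_pathGraph_cons k i
    exact exists_isTwoFactor_separatesSet_of_odd (by omega) hcs hnd hcover
      ⟨t, by omega⟩ (List.ne_nil_of_mem hi) hi hj hj'

/-- For `m ≥ 3` and odd `n ≥ 5`, any two distinct vertices in the same
column of `P_m □ C_n` are separated by a 2-factor consisting of two cycles. -/
theorem statement_6 (m n : ℕ) (hm : 3 ≤ m) (hn : 5 ≤ n) (hodd : Odd n)
    (i : Fin m) (j j' : ZMod n) (hjj : j ≠ j') :
    ∃ H, IsTwoFactor (pathGraph m □ cycleZMod n) H ∧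
      SeparatesSet H {(i, j), (i, j')} :=
  statement_6_general m n hm hn i j j' hjj
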